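/- For y > 0, the negative log conditional density -log f(y | ν; β) = y·exp(-xᵀβ - ν) + exp(xᵀβ + ν)/y - log c equals (|y - m|/y)·(|y - m|/m) + (2 - log c), where m = exp(xᵀβ + ν). -/
import Mathlib


theorem neg_log_cond_density_eq_product_relative_error
    (c : ℝ) (p : ℕ) (x β : Fin p → ℝ) (ν : ℝ) (y : ℝ) (hy : 0 < y)
    (m : ℝ) (hm : m = Real.exp ((∑ j, x j * β j) + ν)) :
    y * Real.exp (-(∑ j, x j * β j) - ν) + Real.exp ((∑ j, x j * β j) + ν) / y - Real.log c
      = (|y - m| / y) * (|y - m| / m) + (2 - Real.log c) := by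
  have hm0 : 0 < m := hm ▸ Real.exp_pos _
  have hinv : Real.exp (-(∑ j, x j * β j) - ν) = m⁻¹ := by
    rw [hm, ← Real.exp_neg]; ring_nf
  have habs : |y - m| * |y - m| = (y - m) * (y - m) := by
    rw [← abs_mul, abs_mul_self]
  rw [hinv, ← hm]
  field_simp
  nlinarith [habs]
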